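/- Let L be a Laurent series in P^{−1} with smooth coefficients and φ(T) a smooth function independent of P. Then for every time variable T_q, ∂_{T_q}(e^{−ad φ}L) = e^{−ad φ}(∂_{T_q}L) − {∂_{T_q}φ, e^{−ad φ}L}. -/

import Mathlib

namespace DMKP

/-- Coefficient functions of a formal Laurent series in `P⁻¹` with time variables
`T = (T₁, …, T_N)`: `A n` is the coefficient of `P^n`. -/
abbrev Coeffs (N : ℕ) := ℤ → (Fin N → ℝ) → ℝ

variable {N : ℕ}

/-- Partial derivative in the direction of the `q`-th time variable. -/
noncomputable def pd (q : Fin N) (f : (Fin N → ℝ) → ℝ) : (Fin N → ℝ) → ℝ :=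
  fun x => fderiv ℝ f x (Pi.single q 1)

/-- Finitely many positive powers of `P`. -/
def BddPow (A : Coeffs N) : Prop := ∃ m : ℤ, ∀ n : ℤ, m < n → A n = 0

/-- All coefficients are smooth functions of the time variables. -/
def SmoothCoeffs (A : Coeffs N) : Prop := ∀ n : ℤ, ContDiff ℝ (⊤ : ℕ∞) (A n)

/-- A Laurent series in `P⁻¹` with smooth coefficients. -/
def IsLaurent (A : Coeffs N) : Prop := BddPow A ∧ SmoothCoeffs A

/-- Termwise `∂_P`. -/
def dP (A : Coeffs N) : Coeffs N := fun n x => ((n + 1 : ℤ) : ℝ) * A (n + 1) x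

/-- Termwise `∂_{T_q}`. -/
noncomputable def dT (q : Fin N) (A : Coeffs N) : Coeffs N := fun n => pd q (A n)

/-- Termwise `∂_X`, where `X = T₁`. -/
noncomputable def dX [NeZero N] (A : Coeffs N) : Coeffs N := dT 0 A

/-- Termwise product of Laurent series. -/
noncomputable def mul (A B : Coeffs N) : Coeffs N := fun n x => ∑' i : ℤ, A i x * B (n - i) x

/-- The Poisson bracket `{f,g} = f_P g_X - f_X g_P`. -/
noncomputable def pb [NeZero N] (A B : Coeffs N) : Coeffs N :=
  fun n x => mul (dP A) (dX B) n x - mul (dX A) (dP B) n x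

/-- Truncation keeping only powers `P^n` with `n ≥ k`. -/
def truncGe (k : ℤ) (A : Coeffs N) : Coeffs N := fun n => if k ≤ n then A n else 0

/-- Truncation keeping only powers `P^n` with `n ≤ k`. -/
def truncLe (k : ℤ) (A : Coeffs N) : Coeffs N := fun n => if n ≤ k then A n else 0

/-- The residue: coefficient of `P⁻¹`. -/
def res (A : Coeffs N) : (Fin N → ℝ) → ℝ := A (-1)

/-- The constant Laurent series `1`. -/
def one' : Coeffs N := fun n => if n = 0 then (fun _ => (1 : ℝ)) else 0

/-- `powC A q` is the `q`-th power `A^q`. -/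
noncomputable def powC (A : Coeffs N) : ℕ → Coeffs N
  | 0 => one'
  | q + 1 => mul A (powC A q)

/-- `e^{-ad φ} A = Σ_{k≥0} (1/k!) (φ_X)^k ∂_P^k A`. -/
noncomputable def expAdNeg [NeZero N] (φ : (Fin N → ℝ) → ℝ) (A : Coeffs N) : Coeffs N :=
  fun n x => ∑' k : ℕ, (pd 0 φ x) ^ k / (Nat.factorial k : ℝ) * (dP^[k] A) n x

/-- `e^{ad φ} A = Σ_{k≥0} (1/k!) (-φ_X)^k ∂_P^k A`. -/
noncomputable def expAdPos [NeZero N] (φ : (Fin N → ℝ) → ℝ) (A : Coeffs N) : Coeffs N :=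
  fun n x => ∑' k : ℕ, (-(pd 0 φ x)) ^ k / (Nat.factorial k : ℝ) * (dP^[k] A) n x

/-- A `P`-independent function viewed as a Laurent series concentrated at `P^0`. -/
def const (φ : (Fin N → ℝ) → ℝ) : Coeffs N := fun n => if n = 0 then φ else 0

/-- Evaluation of the polynomial (non-negative) part of `A` at `P = φ_X`. -/
noncomputable def evalAtPhiX [NeZero N] (A : Coeffs N) (φ : (Fin N → ℝ) → ℝ) :
    (Fin N → ℝ) → ℝ :=
  fun x => ∑' k : ℕ, A (k : ℤ) x * (pd 0 φ x) ^ k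

/-- The shape `λ = P + U₂ P⁻¹ + U₃ P⁻² + ⋯` of the dKP Lax function. -/
def IsDKPShape (lam : Coeffs N) : Prop :=
  (lam 1 = fun _ => (1 : ℝ)) ∧ lam 0 = 0 ∧ ∀ n : ℤ, 2 ≤ n → lam n = 0

/-- The shape `μ = P + V₀ + V₁ P⁻¹ + ⋯` of the dmKP Lax function. -/
def IsDMKPShape (mu : Coeffs N) : Prop :=
  (mu 1 = fun _ => (1 : ℝ)) ∧ ∀ n : ℤ, 2 ≤ n → mu n = 0


/-! ### Auxiliary lemmas for Statement 3 -/

section Aux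

lemma pd_zero_fn (q : Fin N) : pd q (0 : (Fin N → ℝ) → ℝ) = 0 := by
  funext x
  have h0 : (0 : (Fin N → ℝ) → ℝ) = fun _ => (0 : ℝ) := rfl
  simp [pd, h0]

lemma pd_mul (q : Fin N) {f g : (Fin N → ℝ) → ℝ} {x : Fin N → ℝ}
    (hf : DifferentiableAt ℝ f x) (hg : DifferentiableAt ℝ g x) :
    pd q (fun y => f y * g y) x = f x * pd q g x + g x * pd q f x := by
  simp [pd, fderiv_fun_mul hf hg]

lemma pd_mul_const (q : Fin N) {f : (Fin N → ℝ) → ℝ} {x : Fin N → ℝ}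
    (hf : DifferentiableAt ℝ f x) (c : ℝ) :
    pd q (fun y => f y * c) x = pd q f x * c := by
  unfold pd
  rw [fderiv_mul_const hf c]
  simp [mul_comm]

lemma pd_const_mul (q : Fin N) {f : (Fin N → ℝ) → ℝ} {x : Fin N → ℝ}
    (hf : DifferentiableAt ℝ f x) (c : ℝ) :
    pd q (fun y => c * f y) x = c * pd q f x := by
  have h : (fun y => c * f y) = fun y => f y * c := by funext y; ring
  rw [h, pd_mul_const q hf c, mul_comm]

lemma pd_sum (q : Fin N) {ι : Type*} {s : Finset ι} {f : ι → (Fin N → ℝ) → ℝ}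
    {x : Fin N → ℝ} (hf : ∀ i ∈ s, DifferentiableAt ℝ (f i) x) :
    pd q (fun y => ∑ i ∈ s, f i y) x = ∑ i ∈ s, pd q (f i) x := by
  simp [pd, fderiv_fun_sum hf]

lemma contDiff_pd {f : (Fin N → ℝ) → ℝ} (hf : ContDiff ℝ (⊤ : ℕ∞) f) (q : Fin N) :
    ContDiff ℝ (⊤ : ℕ∞) (pd q f) :=
  (hf.fderiv_right (le_refl _)).clm_apply contDiff_const

lemma pd_pow (q : Fin N) {f : (Fin N → ℝ) → ℝ} (hf : ContDiff ℝ (⊤ : ℕ∞) f) (k : ℕ)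
    (x : Fin N → ℝ) :
    pd q (fun y => f y ^ (k + 1)) x = ((k : ℝ) + 1) * f x ^ k * pd q f x := by
  induction k with
  | zero => simp
  | succ j ih =>
      have h1 : (fun y => f y ^ (j + 2)) = fun y => f y * f y ^ (j + 1) := by
        funext y; ring
      rw [h1, pd_mul q (hf.differentiable (by simp) x)
        (((hf.pow (j + 1)).differentiable (by simp)) x), ih]
      push_cast
      ring

/-- Symmetry of second partial derivatives for smooth functions. -/
lemma pd_comm {f : (Fin N → ℝ) → ℝ} (hf : ContDiff ℝ (⊤ : ℕ∞) f) (p q : Fin N)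
    (x : Fin N → ℝ) : pd p (pd q f) x = pd q (pd p f) x := by
  have hd : ∀ y, HasFDerivAt f (fderiv ℝ f y) y := fun y =>
    ((hf.differentiable (by simp)) y).hasFDerivAt
  have hd2 : DifferentiableAt ℝ (fun y => fderiv ℝ f y) x :=
    ((hf.fderiv_right (m := (⊤ : ℕ∞)) (le_refl _)).differentiable (by simp)) x
  have hsymm := second_derivative_symmetric hd hd2.hasFDerivAt
  have key : ∀ v w : Fin N → ℝ,
      fderiv ℝ (fun y => fderiv ℝ f y v) x w = fderiv ℝ (fderiv ℝ f) x w v := by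
    intro v w
    have := fderiv_clm_apply (𝕜 := ℝ) hd2 (differentiableAt_const v)
    rw [this]
    simp
  show fderiv ℝ (fun y => fderiv ℝ f y (Pi.single q 1)) x (Pi.single p 1)
      = fderiv ℝ (fun y => fderiv ℝ f y (Pi.single p 1)) x (Pi.single q 1)
  rw [key, key, hsymm]

/-- Explicit formula for iterated `∂_P`. -/
lemma dP_iter (A : Coeffs N) (k : ℕ) (n : ℤ) (x : Fin N → ℝ) :
    (dP^[k] A) n x = ((∏ j ∈ Finset.range k, (n + j + 1) : ℤ) : ℝ) * A (n + k) x := by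
  induction k generalizing n with
  | zero => simp
  | succ j ih =>
      rw [Function.iterate_succ_apply']
      show ((n + 1 : ℤ) : ℝ) * (dP^[j] A) (n + 1) x = _
      rw [ih]
      have hprod : (∏ i ∈ Finset.range (j + 1), (n + i + 1) : ℤ)
          = (n + 1) * ∏ i ∈ Finset.range j, ((n + 1) + i + 1) := by
        rw [Finset.prod_range_succ', mul_comm]
        congr 1
        · norm_num
        · exact Finset.prod_congr rfl fun i _ => by push_cast; ring
      have hidx : (n + 1) + (j : ℤ) = n + ((j : ℕ) + 1 : ℕ) := by push_cast; ring
      rw [hidx] at *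
      rw [hprod]
      push_cast
      ring

lemma pd_const (q : Fin N) (a : ℝ) : pd q (fun _ : Fin N → ℝ => a) = 0 := by
  funext x
  simp [pd]

lemma prod_succ_shift (n : ℤ) (j : ℕ) :
    (∏ i ∈ Finset.range (j + 1), (n + i + 1) : ℤ)
      = (n + 1) * ∏ i ∈ Finset.range j, ((n + 1) + i + 1) := by
  rw [Finset.prod_range_succ', mul_comm]
  congr 1
  · norm_num
  · exact Finset.prod_congr rfl fun i _ => by push_cast; ring

/-- The Poisson bracket with a `P`-independent series. -/
lemma pb_const [NeZero N] (ψ : (Fin N → ℝ) → ℝ) (B : Coeffs N) (n : ℤ) (x : Fin N → ℝ) :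
    pb (const ψ) B n x = -(pd 0 ψ x * dP B n x) := by
  unfold pb mul
  have h1 : ∀ i : ℤ, dP (const ψ) i x * dX B (n - i) x = 0 := by
    intro i
    unfold dP const
    split_ifs with h
    · have : ((i + 1 : ℤ) : ℝ) = 0 := by exact_mod_cast h
      rw [this, zero_mul, zero_mul]
    · simp
  have h2 : ∀ i : ℤ, i ≠ 0 → dX (const ψ) i x * dP B (n - i) x = 0 := by
    intro i hi
    unfold dX dT const
    rw [if_neg hi, pd_zero_fn]
    simp
  rw [tsum_congr h1, tsum_zero, tsum_eq_single (0 : ℤ) h2]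
  unfold dX dT const
  rw [if_pos rfl]
  simp

end Aux

/-- `∂_{T_q}(e^{-ad φ}L) = e^{-ad φ}(∂_{T_q}L) - {φ_{T_q}, e^{-ad φ}L}`. -/
theorem statement3 {N : ℕ} [NeZero N] (L : Coeffs N) (hL : IsLaurent L)
    (φ : (Fin N → ℝ) → ℝ) (hφ : ContDiff ℝ (⊤ : ℕ∞) φ) (q : Fin N) :
    dT q (expAdNeg φ L)
      = fun n x => expAdNeg φ (dT q L) n x - pb (const (pd q φ)) (expAdNeg φ L) n x := by
  obtain ⟨⟨m, hm⟩, hs⟩ := hL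
  have hu : ContDiff ℝ (⊤ : ℕ∞) (pd 0 φ) := contDiff_pd hφ 0
  have hsd : ∀ k : ℤ, Differentiable ℝ (L k) := fun k => (hs k).differentiable (by simp)
  funext n x
  set K : ℕ := (m + 1 - n).toNat with hKdef
  have hv1 : ∀ k : ℕ, K ≤ k → L (n + k) = 0 := fun k hk => hm _ (by omega)
  have hv2 : ∀ j : ℕ, K ≤ j → L ((n + 1) + j) = 0 := fun j hj => hm _ (by omega)
  have hfd : ∀ k : ℕ,
      DifferentiableAt ℝ (fun y => pd 0 φ y ^ k / (Nat.factorial k : ℝ)) x :=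
    fun k => (((hu.pow k).div_const _).differentiable (by simp)) x
  have hgd : ∀ (k : ℕ) (c : ℝ),
      DifferentiableAt ℝ (fun y => c * L (n + k) y) x :=
    fun k c => ((contDiff_const.mul (hs _)).differentiable (by simp)) x
  -- finite-sum representation of `expAdNeg φ L n`
  have hrep : expAdNeg φ L n = fun y => ∑ k ∈ Finset.range (K + 1),
      pd 0 φ y ^ k / (Nat.factorial k : ℝ) *
        (((∏ j ∈ Finset.range k, (n + j + 1) : ℤ) : ℝ) * L (n + k) y) := by
    funext y
    show (∑' k : ℕ, pd 0 φ y ^ k / (Nat.factorial k : ℝ) * (dP^[k] L) n y) = _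
    rw [tsum_eq_sum (s := Finset.range (K + 1)) (by
      intro k hk
      rw [dP_iter, hv1 k (by simp only [Finset.mem_range] at hk; omega)]
      simp)]
    exact Finset.sum_congr rfl fun k _ => by rw [dP_iter]
  -- finite-sum representation of `expAdNeg φ (dT q L) n x`
  have hE1 : expAdNeg φ (dT q L) n x = ∑ k ∈ Finset.range (K + 1),
      pd 0 φ x ^ k / (Nat.factorial k : ℝ) *
        (((∏ j ∈ Finset.range k, (n + j + 1) : ℤ) : ℝ) * pd q (L (n + k)) x) := by
    show (∑' k : ℕ, pd 0 φ x ^ k / (Nat.factorial k : ℝ) * (dP^[k] (dT q L)) n x) = _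
    rw [tsum_eq_sum (s := Finset.range (K + 1)) (by
      intro k hk
      rw [dP_iter]
      show _ * (_ * pd q (L (n + k)) x) = 0
      rw [hv1 k (by simp only [Finset.mem_range] at hk; omega), pd_zero_fn]
      simp)]
    exact Finset.sum_congr rfl fun k _ => by rw [dP_iter]; rfl
  -- finite-sum representation of `expAdNeg φ L (n+1) x`
  have hE2 : expAdNeg φ L (n + 1) x = ∑ j ∈ Finset.range K,
      pd 0 φ x ^ j / (Nat.factorial j : ℝ) *
        (((∏ i ∈ Finset.range j, ((n + 1) + i + 1) : ℤ) : ℝ) * L ((n + 1) + j) x) := by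
    show (∑' k : ℕ, pd 0 φ x ^ k / (Nat.factorial k : ℝ) * (dP^[k] L) (n + 1) x) = _
    rw [tsum_eq_sum (s := Finset.range K) (by
      intro k hk
      rw [dP_iter, hv2 k (by simp only [Finset.mem_range] at hk; omega)]
      simp)]
    exact Finset.sum_congr rfl fun k _ => by rw [dP_iter]
  -- the Poisson-bracket term
  have hpb : pb (const (pd q φ)) (expAdNeg φ L) n x
      = -(pd 0 (pd q φ) x * (((n + 1 : ℤ) : ℝ) * expAdNeg φ L (n + 1) x)) := by
    rw [pb_const]
    rfl
  -- derivative of each summand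
  have hterm : ∀ k : ℕ,
      pd q (fun y => pd 0 φ y ^ k / (Nat.factorial k : ℝ) *
          (((∏ j ∈ Finset.range k, (n + j + 1) : ℤ) : ℝ) * L (n + k) y)) x
        = pd 0 φ x ^ k / (Nat.factorial k : ℝ) *
            (((∏ j ∈ Finset.range k, (n + j + 1) : ℤ) : ℝ) * pd q (L (n + k)) x)
          + (((∏ j ∈ Finset.range k, (n + j + 1) : ℤ) : ℝ) * L (n + k) x) *
              (pd q (fun y => pd 0 φ y ^ k) x / (Nat.factorial k : ℝ)) := by
    intro k
    have e1 : pd q (fun y => pd 0 φ y ^ k / (Nat.factorial k : ℝ)) x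
        = pd q (fun y => pd 0 φ y ^ k) x / (Nat.factorial k : ℝ) := by
      have h : (fun y => pd 0 φ y ^ k / (Nat.factorial k : ℝ))
          = fun y => pd 0 φ y ^ k * ((Nat.factorial k : ℝ))⁻¹ := by
        funext y; rw [div_eq_mul_inv]
      rw [h, pd_mul_const q (((hu.pow k).differentiable (by simp)) x) _, div_eq_mul_inv]
    rw [pd_mul q (hfd k) (hgd k _), pd_const_mul q ((hsd _) x) _, e1]
  -- assemble
  show pd q (expAdNeg φ L n) x = _
  rw [hrep, pd_sum q (fun k _ => (hfd k).fun_mul (hgd k _)),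
    Finset.sum_congr rfl (fun k _ => hterm k), Finset.sum_add_distrib,
    hpb, sub_neg_eq_add, hE1, hE2]
  congr 1
  rw [Finset.sum_range_succ']
  have hB0 : (fun y : Fin N → ℝ => pd 0 φ y ^ 0) = fun _ => (1 : ℝ) := by
    funext y; rw [pow_zero]
  rw [hB0, pd_const]
  simp only [Pi.zero_apply, zero_div, mul_zero, add_zero]
  rw [Finset.mul_sum, Finset.mul_sum]
  refine Finset.sum_congr rfl fun j _ => ?_
  have hidx : n + ((j + 1 : ℕ) : ℤ) = (n + 1) + (j : ℤ) := by push_cast; ring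
  rw [pd_pow q hu j x, pd_comm hφ q 0 x, prod_succ_shift n j, hidx, Nat.factorial_succ]
  have hf0 : (Nat.factorial j : ℝ) ≠ 0 := Nat.cast_ne_zero.mpr j.factorial_ne_zero
  have hj1 : ((j : ℝ) + 1) ≠ 0 := by positivity
  push_cast
  field_simp

end DMKP
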